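/- Consider an uncertain optimization problem with feasible ground set X contained in a metric space (M, d), objective f : M → Ξ → ℝ, constraints F : M → Ξ → ℝ^m, and uncertainty set U ⊆ Ξ, U nonempty. Let (x̄, ȳ) be a lexicographically minimal feasible solution of Rec(U) with respect to the order (rObj, fObj). Then: (i) the set of strictly robust solutions SR(U) = {x ∈ X : F(x, ξ) ≤ 0 componentwise for all ξ ∈ U} is nonempty if and only if rObj_U(x̄, ȳ) = 0; and (ii) if rObj_U(x̄, ȳ) = 0, then x̄ ∈ SR(U) and x̄ is an optimal solution of the strictly robust counterpart RC(U), i.e. sup_{ξ ∈ U} f(x̄, ξ) ≤ sup_{ξ ∈ U} f(x, ξ) for all x ∈ SR(U). -/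

import Mathlib

/-! Every strictly robust `x` yields the feasible pair `(x, fun _ ↦ x)`, whose recovery cost is `0`
because `U ≠ ∅`. Since recovery costs are nonnegative, lexicographic minimality forces
`rObj(x̄, ȳ) = 0` and `fObj(ȳ) ≤ sup_U f(x, ·)`. Conversely `rObj(x̄, ȳ) = 0` means `ȳ ≡ x̄` on `U`,
so feasibility of `(x̄, ȳ)` says `x̄ ∈ SR(U)` and `fObj(ȳ)` is the robust objective of `x̄`. -/

section

variable {M Ξ : Type*} [MetricSpace M] {m : ℕ}

/-- `(x, y)` is feasible for `Rec(U)`. -/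
def RecFeasible (X : Set M) (F : M → Ξ → Fin m → ℝ) (U : Set Ξ) (x : M) (y : Ξ → M) : Prop :=
  x ∈ X ∧ ∀ ξ ∈ U, y ξ ∈ X ∧ ∀ i, F (y ξ) ξ i ≤ 0

/-- Worst-case objective value, in the extended reals. -/
noncomputable def fObj (f : M → Ξ → ℝ) (U : Set Ξ) (y : Ξ → M) : EReal :=
  ⨆ ξ ∈ U, (f (y ξ) ξ : EReal)

/-- Worst-case recovery cost, in the extended reals. -/
noncomputable def rObj (U : Set Ξ) (x : M) (y : Ξ → M) : EReal :=
  ⨆ ξ ∈ U, (dist x (y ξ) : EReal)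

/-- The set of strictly robust solutions `SR(U)`. -/
def StrictlyRobust (X : Set M) (F : M → Ξ → Fin m → ℝ) (U : Set Ξ) : Set M :=
  {x ∈ X | ∀ ξ ∈ U, ∀ i, F x ξ i ≤ 0}

variable {X : Set M} {F : M → Ξ → Fin m → ℝ} {U : Set Ξ} {x : M} {y : Ξ → M}

theorem dist_le_rObj {ξ : Ξ} (hξ : ξ ∈ U) : (dist x (y ξ) : EReal) ≤ rObj U x y :=
  le_iSup₂ (f := fun ξ _ => (dist x (y ξ) : EReal)) ξ hξ

theorem rObj_nonneg (hU : U.Nonempty) : 0 ≤ rObj U x y := by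
  obtain ⟨ξ, hξ⟩ := hU
  exact (EReal.coe_nonneg.mpr dist_nonneg).trans (dist_le_rObj hξ)

theorem rObj_const (hU : U.Nonempty) (x : M) : rObj U x (fun _ => x) = 0 :=
  le_antisymm (iSup₂_le fun _ _ => by simp) (rObj_nonneg hU)

theorem eq_of_rObj_eq_zero (h : rObj U x y = 0) {ξ : Ξ} (hξ : ξ ∈ U) : y ξ = x := by
  have hle := dist_le_rObj (x := x) (y := y) hξ
  rw [h, EReal.coe_nonpos] at hle
  exact (dist_le_zero.mp hle).symm

theorem fObj_eq_of_rObj_eq_zero (f : M → Ξ → ℝ) (h : rObj U x y = 0) :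
    fObj f U y = ⨆ ξ ∈ U, (f x ξ : EReal) :=
  biSup_congr fun _ hξ => by rw [eq_of_rObj_eq_zero h hξ]

theorem RecFeasible.mem_strictlyRobust (hxy : RecFeasible X F U x y) (h : rObj U x y = 0) :
    x ∈ StrictlyRobust X F U :=
  ⟨hxy.1, fun ξ hξ => eq_of_rObj_eq_zero h hξ ▸ (hxy.2 ξ hξ).2⟩

theorem stmt9 (X : Set M) (f : M → Ξ → ℝ) (F : M → Ξ → Fin m → ℝ) (U : Set Ξ)
    (hU : U.Nonempty)
    (xbar : M) (ybar : Ξ → M)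
    (hfeas : RecFeasible X F U xbar ybar)
    (hlex : ∀ x y, RecFeasible X F U x y →
      rObj U xbar ybar < rObj U x y ∨
        (rObj U x y = rObj U xbar ybar ∧ fObj f U ybar ≤ fObj f U y)) :
    ((StrictlyRobust X F U).Nonempty ↔ rObj U xbar ybar = 0) ∧
      (rObj U xbar ybar = 0 →
        xbar ∈ StrictlyRobust X F U ∧
          ∀ x ∈ StrictlyRobust X F U,
            (⨆ ξ ∈ U, (f xbar ξ : EReal)) ≤ ⨆ ξ ∈ U, (f x ξ : EReal)) := by
  have hcompare : ∀ x ∈ StrictlyRobust X F U,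
      rObj U xbar ybar = 0 ∧ fObj f U ybar ≤ ⨆ ξ ∈ U, (f x ξ : EReal) := by
    intro x hx
    have hconst : RecFeasible X F U x (fun _ => x) := ⟨hx.1, fun ξ hξ => ⟨hx.1, hx.2 ξ hξ⟩⟩
    rcases hlex x _ hconst with hlt | ⟨heq, hle⟩
    · rw [rObj_const hU] at hlt
      exact absurd hlt (rObj_nonneg hU).not_gt
    · exact ⟨(rObj_const hU x ▸ heq).symm, hle⟩
  refine ⟨⟨fun ⟨x, hx⟩ => (hcompare x hx).1,
    fun h0 => ⟨xbar, hfeas.mem_strictlyRobust h0⟩⟩, fun h0 => ⟨hfeas.mem_strictlyRobust h0, ?_⟩⟩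
  intro x hx
  rw [← fObj_eq_of_rObj_eq_zero f h0]
  exact (hcompare x hx).2

end
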